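/- arXiv:2005.02823 — 2 statements merged into one kernel-verified Lean document; each statement's English description precedes it below -/
import Mathlib

section
/- Every finite tree T with at least two vertices satisfies χ''_fdt(T) ≤ 1 + 2Δ(T); that is, T admits a felicitous-difference proper total coloring with color set {1,…,1+2Δ(T)}, where Δ(T) is the maximum vertex degree of T. -/
open SimpleGraph

set_option linter.unusedSectionVars false
set_option linter.unusedVariables false

section Aux

variable {V : Type*} [Fintype V] [DecidableEq V]

/-- Index of `w` among the neighbors of `u` (junk value `0` if not adjacent). -/
noncomputable def nIdx (T : SimpleGraph V) [DecidableRel T.Adj] (u w : V) : ℕ :=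
  if h : T.Adj u w then
    ((Fintype.equivFinOfCardEq (T.card_neighborSet_eq_degree u)) ⟨w, h⟩ : Fin (T.degree u)).val
  else 0

lemma nIdx_lt (T : SimpleGraph V) [DecidableRel T.Adj] {u w : V} (h : T.Adj u w) :
    nIdx T u w < T.degree u := by
  simp only [nIdx, dif_pos h]
  exact Fin.is_lt _

lemma nIdx_inj (T : SimpleGraph V) [DecidableRel T.Adj] {u w w' : V} (h : T.Adj u w)
    (h' : T.Adj u w') (he : nIdx T u w = nIdx T u w') : w = w' := by
  simp only [nIdx, dif_pos h, dif_pos h'] at he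
  have := (Fintype.equivFinOfCardEq (T.card_neighborSet_eq_degree u)).injective
    (Fin.val_injective he)
  exact Subtype.mk_eq_mk.mp this

/-- The parent of `v` in the tree rooted at `r` (junk value `r` if none exists). -/
noncomputable def par (T : SimpleGraph V) (r v : V) : V :=
  letI := Classical.dec (∃ u, T.Adj v u ∧ T.dist r u + 1 = T.dist r v)
  if h : ∃ u, T.Adj v u ∧ T.dist r u + 1 = T.dist r v then h.choose else r

/-- Color index of a vertex, defined by recursion on distance from the root. -/
noncomputable def cc (T : SimpleGraph V) [DecidableRel T.Adj] (r : V) (v : V) : ℕ :=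
  if T.dist r v ≤ 1 then nIdx T (par T r v) v
  else if hd : T.dist r (par T r (par T r v)) < T.dist r v then
    (if nIdx T (par T r v) v = cc T r (par T r (par T r v))
      then nIdx T (par T r v) (par T r (par T r v))
      else nIdx T (par T r v) v)
  else nIdx T (par T r v) v
termination_by T.dist r v


lemma par_spec {T : SimpleGraph V} {r v : V}
    (h : ∃ u, T.Adj v u ∧ T.dist r u + 1 = T.dist r v) :
    T.Adj v (par T r v) ∧ T.dist r (par T r v) + 1 = T.dist r v := by
  classical
  rw [par]
  rw [dif_pos h]
  exact h.choose_spec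

lemma par_junk {T : SimpleGraph V} {r v : V}
    (h : ¬ ∃ u, T.Adj v u ∧ T.dist r u + 1 = T.dist r v) :
    par T r v = r := by
  classical
  rw [par, dif_neg h]


variable {T : SimpleGraph V} [DecidableRel T.Adj]

/-- In a tree, distances to a fixed root of adjacent vertices differ by exactly one. -/
lemma tree_adj_dist (htree : T.IsTree) (r : V) {u v : V} (h : T.Adj u v) :
    T.dist r v = T.dist r u + 1 ∨ T.dist r u = T.dist r v + 1 := by
  have conn := htree.isConnected
  obtain ⟨P, hP, hPl⟩ := conn.exists_path_of_dist r u
  by_cases hv : v ∈ P.support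
  · right
    have hvu : v ≠ u := h.ne'
    have h1 : (P.takeUntil v hv).length + (P.dropUntil v hv).length = P.length := by
      have := congrArg Walk.length (P.take_spec hv)
      rwa [Walk.length_append] at this
    have h2 : 1 ≤ (P.dropUntil v hv).length := by
      rcases Nat.eq_zero_or_pos (P.dropUntil v hv).length with h0 | h0
      · exact absurd (Walk.eq_of_length_eq_zero h0) hvu
      · exact h0
    have h3 : T.dist r v ≤ (P.takeUntil v hv).length := T.dist_le _
    have h4 : T.dist r u ≤ T.dist r v + T.dist v u := conn.dist_triangle
    have h5 : T.dist v u = 1 := dist_eq_one_iff_adj.mpr h.symm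
    omega
  · left
    have hW : (P.concat h).IsPath := by
      rw [← Walk.isPath_reverse_iff, Walk.reverse_concat]
      exact (Walk.cons_isPath_iff _ _).mpr ⟨hP.reverse, by simpa using hv⟩
    obtain ⟨Q, hQ, hQl⟩ := conn.exists_path_of_dist r v
    have heq : P.concat h = Q := by
      have := htree.IsAcyclic.path_unique ⟨P.concat h, hW⟩ ⟨Q, hQ⟩
      exact Subtype.ext_iff.mp this
    have := congrArg Walk.length heq
    rw [Walk.length_concat] at this
    omega

/-- Every non-root vertex has a parent. -/
lemma par_exists (htree : T.IsTree) {r v : V} (hvr : v ≠ r) :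
    ∃ u, T.Adj v u ∧ T.dist r u + 1 = T.dist r v := by
  have conn := htree.isConnected
  have hpos : 0 < T.dist r v := conn.pos_dist_of_ne (Ne.symm hvr)
  obtain ⟨P, hP, hPl⟩ := conn.exists_path_of_dist r v
  obtain ⟨w, hadj, q, hq⟩ := Walk.exists_eq_cons_of_ne hvr P.reverse
  have hql : q.length + 1 = T.dist r v := by
    have := congrArg Walk.length hq
    rw [Walk.length_reverse, Walk.length_cons] at this
    omega
  have h1 : T.dist r w ≤ q.length := by
    rw [T.dist_comm]
    exact T.dist_le q
  have h2 : T.dist r v ≤ T.dist r w + 1 := by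
    have h4 : T.dist r v ≤ T.dist r w + T.dist w v := conn.dist_triangle
    have h5 : T.dist w v = 1 := dist_eq_one_iff_adj.mpr hadj.symm
    omega
  exact ⟨w, hadj, by omega⟩

/-- The parent is the unique neighbor closer to the root. -/
lemma par_eq (htree : T.IsTree) {r u v : V} (h : T.Adj v u)
    (hd : T.dist r u + 1 = T.dist r v) : par T r v = u := by
  have conn := htree.isConnected
  have hvr : v ≠ r := by
    intro hvr
    rw [hvr, T.dist_self] at hd
    omega
  obtain ⟨hadj, hdp⟩ := par_spec (par_exists htree hvr)
  set p := par T r v with hp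
  by_contra hne
  obtain ⟨P, hP, hPl⟩ := conn.exists_path_of_dist r u
  obtain ⟨P', hP', hPl'⟩ := conn.exists_path_of_dist r p
  have hvP : v ∉ P.support := by
    intro hv
    have h3 : T.dist r v ≤ (P.takeUntil v hv).length := T.dist_le _
    have h4 := P.length_takeUntil_le hv
    omega
  have hvP' : v ∉ P'.support := by
    intro hv
    have h3 : T.dist r v ≤ (P'.takeUntil v hv).length := T.dist_le _
    have h4 := P'.length_takeUntil_le hv
    omega
  have hW : (P.concat h.symm).IsPath := by
    rw [← Walk.isPath_reverse_iff, Walk.reverse_concat]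
    exact (Walk.cons_isPath_iff _ _).mpr ⟨hP.reverse, by simpa using hvP⟩
  have hW' : (P'.concat hadj.symm).IsPath := by
    rw [← Walk.isPath_reverse_iff, Walk.reverse_concat]
    exact (Walk.cons_isPath_iff _ _).mpr ⟨hP'.reverse, by simpa using hvP'⟩
  have heq : P.concat h.symm = P'.concat hadj.symm := by
    have := htree.IsAcyclic.path_unique ⟨P.concat h.symm, hW⟩ ⟨P'.concat hadj.symm, hW'⟩
    exact Subtype.ext_iff.mp this
  obtain ⟨huv, -⟩ := Walk.concat_inj heq
  exact hne huv.symm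


lemma cc_of_le_one {r v : V} (h : T.dist r v ≤ 1) :
    cc T r v = nIdx T (par T r v) v := by
  rw [cc, if_pos h]

lemma cc_root (r : V) : cc T r r = 0 := by
  rw [cc_of_le_one (by rw [T.dist_self]; omega)]
  have hj : par T r r = r := par_junk (by
    rintro ⟨u, -, hu⟩
    rw [T.dist_self] at hu
    omega)
  rw [hj, nIdx, dif_neg (T.irrefl)]

lemma cc_of_ge_two (htree : T.IsTree) {r v : V} (h2 : 2 ≤ T.dist r v) :
    cc T r v = (if nIdx T (par T r v) v = cc T r (par T r (par T r v))
      then nIdx T (par T r v) (par T r (par T r v))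
      else nIdx T (par T r v) v) := by
  have hvr : v ≠ r := by
    intro h; subst h; rw [T.dist_self] at h2; omega
  obtain ⟨hadj, hdp⟩ := par_spec (par_exists htree hvr)
  have hur : par T r v ≠ r := by
    intro h; rw [h, T.dist_self] at hdp; omega
  obtain ⟨hadj2, hdp2⟩ := par_spec (par_exists htree hur)
  rw [cc, if_neg (by omega), dif_pos (by omega)]

lemma cc_child_formula (htree : T.IsTree) {r u v : V} (h : T.Adj u v)
    (hd : T.dist r v = T.dist r u + 1) (hur : u ≠ r) :
    cc T r v = if nIdx T u v = cc T r (par T r u) then nIdx T u (par T r u)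
      else nIdx T u v := by
  have hpv : par T r v = u := par_eq htree h.symm hd.symm
  have hu1 : 0 < T.dist r u := htree.isConnected.pos_dist_of_ne (Ne.symm hur)
  rw [cc_of_ge_two htree (by omega), hpv]

lemma cc_child_ne (htree : T.IsTree) {r u v w : V} (hv : T.Adj u v)
    (hdv : T.dist r v = T.dist r u + 1) (hw : T.Adj u w)
    (hdw : T.dist r w = T.dist r u + 1) (hvw : v ≠ w) : cc T r v ≠ cc T r w := by
  by_cases hur : u = r
  · subst hur
    rw [T.dist_self] at hdv hdw
    rw [cc_of_le_one (by omega), cc_of_le_one (by omega),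
      par_eq htree hv.symm (by rw [T.dist_self]; omega),
      par_eq htree hw.symm (by rw [T.dist_self]; omega)]
    exact fun he => hvw (nIdx_inj T hv hw he)
  · rw [cc_child_formula htree hv hdv hur, cc_child_formula htree hw hdw hur]
    obtain ⟨hpu, hpd⟩ := par_spec (par_exists htree hur)
    have hvp : v ≠ par T r u := by intro e; rw [e] at hdv; omega
    have hwp : w ≠ par T r u := by intro e; rw [e] at hdw; omega
    have h1 : nIdx T u v ≠ nIdx T u w := fun he => hvw (nIdx_inj T hv hw he)
    have h2 : nIdx T u v ≠ nIdx T u (par T r u) := fun he => hvp (nIdx_inj T hv hpu he)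
    have h3 : nIdx T u w ≠ nIdx T u (par T r u) := fun he => hwp (nIdx_inj T hw hpu he)
    split_ifs with ha hb hb <;> omega

lemma cc_parent_ne (htree : T.IsTree) {r u v : V} (hv : T.Adj u v)
    (hdv : T.dist r v = T.dist r u + 1) (hur : u ≠ r) :
    cc T r v ≠ cc T r (par T r u) := by
  rw [cc_child_formula htree hv hdv hur]
  obtain ⟨hpu, hpd⟩ := par_spec (par_exists htree hur)
  have hvp : v ≠ par T r u := by intro e; rw [e] at hdv; omega
  have h2 : nIdx T u v ≠ nIdx T u (par T r u) := fun he => hvp (nIdx_inj T hv hpu he)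
  split_ifs with ha <;> omega

lemma cc_lt (htree : T.IsTree) (hM : 1 ≤ T.maxDegree) (r v : V) :
    cc T r v < T.maxDegree := by
  by_cases hvr : v = r
  · rw [hvr, cc_root]; omega
  · obtain ⟨hadj, hdp⟩ := par_spec (par_exists htree hvr)
    have hb : nIdx T (par T r v) v < T.maxDegree :=
      lt_of_lt_of_le (nIdx_lt T hadj.symm) (T.degree_le_maxDegree _)
    by_cases h1 : T.dist r v ≤ 1
    · rw [cc_of_le_one h1]; exact hb
    · rw [cc_of_ge_two htree (by omega)]
      have hur : par T r v ≠ r := by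
        intro h; rw [h, T.dist_self] at hdp; omega
      obtain ⟨hadj2, hdp2⟩ := par_spec (par_exists htree hur)
      have hb2 : nIdx T (par T r v) (par T r (par T r v)) < T.maxDegree :=
        lt_of_lt_of_le (nIdx_lt T hadj2) (T.degree_le_maxDegree _)
      split_ifs <;> assumption

end Aux

theorem tree_fdt_aux {V : Type*} [Fintype V] [DecidableEq V]
    (T : SimpleGraph V) [DecidableRel T.Adj]
    (htree : T.IsTree) (hcard : 2 ≤ Fintype.card V) :
    ∃ (fv : V → ℕ) (fe : V → V → ℕ), (∀ v : V, 1 ≤ fv v ∧ fv v ≤ 1 + 2 * T.maxDegree) ∧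
    (∀ ⦃u v : V⦄, T.Adj u v → 1 ≤ fe u v ∧ fe u v ≤ 1 + 2 * T.maxDegree) ∧
    (∀ ⦃u v : V⦄, T.Adj u v → fe u v = fe v u) ∧
    (∀ ⦃u v : V⦄, T.Adj u v → fv u ≠ fv v) ∧
    (∀ ⦃u v w : V⦄, T.Adj u v → T.Adj u w → v ≠ w → fe u v ≠ fe u w) ∧
    (∀ ⦃u v : V⦄, T.Adj u v → fe u v ≠ fv u ∧ fe u v ≠ fv v) ∧
    (∀ ⦃u v : V⦄, T.Adj u v →
      |(fv u : ℤ) + (fv v : ℤ) - (fe u v : ℤ)| = (T.maxDegree : ℤ) + 1) := by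
  classical
  have hne : Nonempty V := Fintype.card_pos_iff.mp (by omega)
  obtain ⟨r⟩ := hne
  obtain ⟨v₀, hv₀⟩ := Fintype.exists_ne_of_one_lt_card (by omega) r
  have conn := htree.isConnected
  set Δ := T.maxDegree with hΔdef
  have hM : 1 ≤ Δ := by
    obtain ⟨u, hadj, -⟩ := par_exists htree hv₀
    have h1 : 0 < T.degree v₀ := (T.degree_pos_iff_exists_adj v₀).mpr ⟨_, hadj⟩
    have h2 := T.degree_le_maxDegree v₀
    omega
  have hlt : ∀ v, cc T r v < Δ := cc_lt htree hM r
  have hmod : ∀ {u v : V}, T.Adj u v → T.dist r u % 2 ≠ T.dist r v % 2 := by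
    intro u v h
    rcases tree_adj_dist htree r h with h1 | h1 <;> omega
  have hccne : ∀ {u v w : V}, T.Adj u v → T.Adj u w → v ≠ w →
      cc T r v ≠ cc T r w := by
    intro u v w huv huw hvw
    rcases tree_adj_dist htree r huv with h1 | h1 <;>
      rcases tree_adj_dist htree r huw with h2 | h2
    · exact cc_child_ne htree huv h1 huw h2 hvw
    · have hur : u ≠ r := by
        intro e; rw [e, T.dist_self] at h2; omega
      have hw : par T r u = w := par_eq htree huw h2.symm
      rw [← hw]
      exact cc_parent_ne htree huv h1 hur
    · have hur : u ≠ r := by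
        intro e; rw [e, T.dist_self] at h1; omega
      have hv' : par T r u = v := par_eq htree huv h1.symm
      rw [← hv']
      exact (cc_parent_ne htree huw h2 hur).symm
    · have hv' : par T r u = v := par_eq htree huv h1.symm
      have hw' : par T r u = w := par_eq htree huw h2.symm
      exact absurd (hv'.symm.trans hw') hvw
  refine ⟨fun v => cc T r v + (if T.dist r v % 2 = 0 then 1 else Δ + 2),
    fun u v => cc T r u + cc T r v + 2, ?_, ?_, ?_, ?_, ?_, ?_, ?_⟩
  · intro v
    have := hlt v
    dsimp only
    split_ifs <;> omega
  · intro u v h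
    have := hlt u; have := hlt v
    dsimp only
    omega
  · intro u v h
    dsimp only
    omega
  · intro u v h
    have hm := hmod h
    have := hlt u; have := hlt v
    dsimp only
    split_ifs <;> omega
  · intro u v w huv huw hvw
    have := hccne huv huw hvw
    dsimp only
    omega
  · intro u v h
    have := hlt u; have := hlt v
    dsimp only
    constructor <;> (split_ifs <;> omega)
  · intro u v h
    have hm := hmod h
    dsimp only
    split_ifs with h1 h2 h2
    · exfalso; omega
    · push_cast
      rw [abs_eq (by positivity : (0:ℤ) ≤ (Δ:ℤ)+1)]
      left; ring
    · push_cast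
      rw [abs_eq (by positivity : (0:ℤ) ≤ (Δ:ℤ)+1)]
      left; ring
    · exfalso; omega



/-- A proper total coloring of `G` with color set `{1,…,M}`: vertex colors `fv`,
edge colors `fe` (symmetric on adjacent pairs), adjacent vertices get distinct
colors, edges sharing an endpoint get distinct colors, and each edge's color is
distinct from the colors of its endpoints. -/
def IsProperTotalColoring {V : Type*} (G : SimpleGraph V) (M : ℕ)
    (fv : V → ℕ) (fe : V → V → ℕ) : Prop :=
  (∀ v : V, 1 ≤ fv v ∧ fv v ≤ M) ∧
  (∀ ⦃u v : V⦄, G.Adj u v → 1 ≤ fe u v ∧ fe u v ≤ M) ∧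
  (∀ ⦃u v : V⦄, G.Adj u v → fe u v = fe v u) ∧
  (∀ ⦃u v : V⦄, G.Adj u v → fv u ≠ fv v) ∧
  (∀ ⦃u v w : V⦄, G.Adj u v → G.Adj u w → v ≠ w → fe u v ≠ fe u w) ∧
  (∀ ⦃u v : V⦄, G.Adj u v → fe u v ≠ fv u ∧ fe u v ≠ fv v)

/-- A felicitous-difference proper total coloring: a proper total coloring such
that `|fv u + fv v - fe u v|` equals a constant `k` on every edge `uv`. -/
def IsFDTotalColoring {V : Type*} (G : SimpleGraph V) (M : ℕ)
    (fv : V → ℕ) (fe : V → V → ℕ) : Prop :=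
  IsProperTotalColoring G M fv fe ∧
  ∃ k : ℤ, ∀ ⦃u v : V⦄, G.Adj u v → |(fv u : ℤ) + (fv v : ℤ) - (fe u v : ℤ)| = k

/-- `G` admits a felicitous-difference proper total coloring with color set `{1,…,M}`. -/
def HasFDTotalColoring {V : Type*} (G : SimpleGraph V) (M : ℕ) : Prop :=
  ∃ fv fe, IsFDTotalColoring G M fv fe

/-- Every finite tree with at least two vertices admits a felicitous-difference
proper total coloring with color set `{1,…,1+2Δ(T)}`. -/
theorem tree_fdt_le_one_add_two_maxDegree {V : Type*} [Fintype V] [DecidableEq V]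
    (T : SimpleGraph V) [DecidableRel T.Adj]
    (htree : T.IsTree) (hcard : 2 ≤ Fintype.card V) :
    HasFDTotalColoring T (1 + 2 * T.maxDegree) := by
  obtain ⟨fv, fe, h1, h2, h3, h4, h5, h6, h7⟩ := tree_fdt_aux T htree hcard
  exact ⟨fv, fe, ⟨h1, h2, h3, h4, h5, h6⟩, (T.maxDegree : ℤ) + 1, h7⟩
end

section
/- For every positive integer m with m ≥ 2 and for K_{m,m} the complete bipartite graph with parts {u_1,…,u_m} and {v_1,…,v_m}, there exists a felicitous-difference proper total coloring f of K_{m,m} with color set {1,…,3m}; explicitly, one may verify existence by exhibiting a proper total coloring f: V(K_{m,m}) ∪ E(K_{m,m}) → {1,…,3m} and a constant k such that |f(u)+f(v)−f(uv)| = k for every edge uv. -/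
/-- For every `m ≥ 2`, the complete bipartite graph `K_{m,m}` admits a
felicitous-difference proper total coloring with color set `{1,…,3m}`:
there exist a proper total coloring `(fv, fe)` and a constant `k` with
`|fv u + fv v - fe u v| = k` on every edge. -/
theorem completeBipartite_has_fdt_coloring (m : ℕ) (hm : 2 ≤ m) :
    ∃ (fv : (Fin m ⊕ Fin m) → ℕ) (fe : (Fin m ⊕ Fin m) → (Fin m ⊕ Fin m) → ℕ),
      IsProperTotalColoring (completeBipartiteGraph (Fin m) (Fin m)) (3 * m) fv fe ∧
      ∃ k : ℤ, ∀ ⦃u v : Fin m ⊕ Fin m⦄, (completeBipartiteGraph (Fin m) (Fin m)).Adj u v →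
        |(fv u : ℤ) + (fv v : ℤ) - (fe u v : ℤ)| = k := by
  refine ⟨fun x => Sum.elim (fun i => i.1 + 1) (fun j => m + j.1 + 1) x,
    fun x y => match x, y with
      | Sum.inl i, Sum.inr j => i.1 + j.1 + m + 2
      | Sum.inr j, Sum.inl i => i.1 + j.1 + m + 2
      | _, _ => 1, ?_, 0, ?_⟩
  · refine ⟨?_, ?_, ?_, ?_, ?_, ?_⟩
    · rintro (i | j)
      · have := i.2; simp only [Sum.elim_inl]; omega
      · have := j.2; simp only [Sum.elim_inr]; omega
    · rintro (i | j) (i' | j') h <;> simp_all [completeBipartiteGraph] <;>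
        first
        | (have := i.2; have := j'.2; omega)
        | (have := i'.2; have := j.2; omega)
    · rintro (i | j) (i' | j') h <;> simp_all [completeBipartiteGraph]
    · rintro (i | j) (i' | j') h <;> simp_all [completeBipartiteGraph] <;>
        first
        | (have := i.2; omega)
        | (have := i'.2; omega)
    · rintro (i | j) (i' | j') (i'' | j'') h1 h2 hne <;>
        simp_all [completeBipartiteGraph, Fin.val_inj]
    · rintro (i | j) (i' | j') h <;> simp_all [completeBipartiteGraph] <;>
        first
        | (have := i.2; have := j'.2; omega)
        | (have := i'.2; have := j.2; omega)
  · rintro (i | j) (i' | j') h <;> simp_all [completeBipartiteGraph] <;> omega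
end
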